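/- arXiv:2312.01390 — 4 statements merged into one kernel-verified Lean document; each statement's English description precedes it below -/
import Mathlib

section
/- Let {Wₙ} be i.i.d. real random variables with E|W₁| < ∞, E W₁ = 0, and ℙ(W₁ ≠ 0) > 0. Then almost surely liminf Sₙ = −∞ and limsup Sₙ = +∞, where Sₙ = W₁ + ⋯ + Wₙ. -/
open MeasureTheory ProbabilityTheory Filter Finset
open scoped Topology

/-!
By Kolmogorov's 0-1 law the partial sums `Sₙ` are bounded above with probability `0` or `1`.
In the second case `M = supₙ Sₙ` (with `S₀ = 0`) is a.s. finite and satisfies Lindley's equation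
`M = max 0 (W₀ + M')`, where `M'` is the same supremum for the shifted walk, independent of `W₀`
and distributed as `M`. Truncating at level `K` and using `E W₀ = 0` shows `W₀ + M' ≥ 0` a.s., so
`M = W₀ + M'`; comparing Laplace transforms gives `E e^{-W₀} = 1 = e^{-E W₀}`, and strict convexity
of the exponential forces `W₀ = 0` a.s. Applying this to `W` and to `-W` gives both conclusions.
-/

section LindleyFixedPoint

variable {Ω : Type*} {mΩ : MeasurableSpace Ω} {P : Measure Ω} {X Y : Ω → ℝ}

lemma max_neg_zero_eq_min_max_add_max_sub_sub {z K : ℝ} (hK : 0 ≤ K) :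
    max (-z) 0 = min (max 0 z) K + max (z - K) 0 - z := by
  simp only [max_def, min_def]
  split_ifs <;> linarith

lemma tendsto_integral_max_add_min_sub (hX : Integrable X P) (hY : Measurable Y) :
    Tendsto (fun K : ℕ => ∫ ω, max (X ω + min (Y ω) K - K) 0 ∂P) atTop (𝓝 0) := by
  have h := tendsto_integral_of_dominated_convergence (μ := P) (fun ω => |X ω|)
    (F := fun K : ℕ => fun ω => max (X ω + min (Y ω) K - K) 0) (f := fun _ => 0)
    (fun K => (((hX.aemeasurable.add (hY.min measurable_const).aemeasurable).sub
      aemeasurable_const).max aemeasurable_const).aestronglyMeasurable)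
    hX.abs (fun K => ae_of_all _ fun ω => ?_) (ae_of_all _ fun ω => ?_)
  · simpa using h
  · rw [Real.norm_of_nonneg (le_max_right _ _)]
    exact max_le (by linarith [le_abs_self (X ω), min_le_right (Y ω) K]) (abs_nonneg _)
  · refine tendsto_const_nhds.congr' ?_
    filter_upwards [tendsto_natCast_atTop_atTop.eventually_ge_atTop (max (Y ω) (X ω + Y ω))]
      with K hK
    rw [min_eq_left (le_of_max_le_left hK), max_eq_right (by linarith [le_of_max_le_right hK])]

variable [IsProbabilityMeasure P]

lemma integral_max_neg_add_le (hX : Integrable X P) (hmean : ∫ ω, X ω ∂P = 0)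
    (hY : Measurable Y) (hY0 : 0 ≤ Y)
    (hlaw : P.map (fun ω => max 0 (X ω + Y ω)) = P.map Y) {K : ℝ} (hK : 0 ≤ K) :
    ∫ ω, max (-(X ω + Y ω)) 0 ∂P ≤ ∫ ω, max (X ω + min (Y ω) K - K) 0 ∂P := by
  set T := fun ω => X ω + min (Y ω) K
  have hYK : Integrable (fun ω => min (Y ω) K) P :=
    .of_bound (hY.min measurable_const).aestronglyMeasurable K <| ae_of_all _ fun ω => by
      rw [Real.norm_of_nonneg (le_min (hY0 ω) hK)]; exact min_le_right _ _
  have hT : Integrable T P := hX.add hYK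
  have hclip : ∀ Z : Ω → ℝ, AEMeasurable Z P →
      Integrable (fun ω => min (max 0 (Z ω)) K) P := fun Z hZ =>
    .of_bound (aemeasurable_const.max hZ |>.min aemeasurable_const).aestronglyMeasurable K <|
      ae_of_all _ fun ω => by
        rw [Real.norm_of_nonneg (le_min (le_max_left _ _) hK)]; exact min_le_right _ _
  have hexcess : Integrable (fun ω => max (T ω - K) 0) P :=
    hX.abs.mono'
      ((hT.aemeasurable.sub aemeasurable_const).max aemeasurable_const).aestronglyMeasurable
      (ae_of_all _ fun ω => by
        rw [Real.norm_of_nonneg (le_max_right _ _)]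
        exact max_le (by linarith [le_abs_self (X ω), min_le_right (Y ω) K]) (abs_nonneg _))
  have hS : AEMeasurable (fun ω => X ω + Y ω) P := hX.aemeasurable.add hY.aemeasurable
  have hclip_law : ∫ ω, min (max 0 (X ω + Y ω)) K ∂P = ∫ ω, min (Y ω) K ∂P := by
    have hcont : Continuous fun y : ℝ => min y K := continuous_id.min continuous_const
    rw [← integral_map (aemeasurable_const.max hS) hcont.aestronglyMeasurable, hlaw,
      integral_map hY.aemeasurable hcont.aestronglyMeasurable]
  have hclip_le : ∫ ω, min (max 0 (T ω)) K ∂P ≤ ∫ ω, min (max 0 (X ω + Y ω)) K ∂P :=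
    integral_mono (hclip T hT.aemeasurable) (hclip _ hS) fun ω => by
      simp only [T]; gcongr; exact min_le_left _ _
  have hmeanT : ∫ ω, T ω ∂P = ∫ ω, min (Y ω) K ∂P := by
    simp only [T]; rw [integral_add hX hYK, hmean, zero_add]
  calc ∫ ω, max (-(X ω + Y ω)) 0 ∂P ≤ ∫ ω, max (-T ω) 0 ∂P :=
        integral_mono_of_nonneg (ae_of_all _ fun ω => le_max_right _ _) hT.neg_part
          (ae_of_all _ fun ω => by simp only [T]; gcongr; exact min_le_left _ _)
    _ = ∫ ω, min (max 0 (T ω)) K ∂P + ∫ ω, max (T ω - K) 0 ∂P - ∫ ω, T ω ∂P := by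
        rw [← integral_add (hclip T hT.aemeasurable) hexcess, ← integral_sub _ hT]
        · exact integral_congr_ae (ae_of_all _ fun ω => max_neg_zero_eq_min_max_add_max_sub_sub hK)
        · exact (hclip T hT.aemeasurable).add hexcess
    _ ≤ ∫ ω, max (T ω - K) 0 ∂P := by linarith

lemma ae_add_nonneg_of_map_max_eq (hX : Integrable X P) (hmean : ∫ ω, X ω ∂P = 0)
    (hY : Measurable Y) (hY0 : 0 ≤ Y)
    (hlaw : P.map (fun ω => max 0 (X ω + Y ω)) = P.map Y) :
    ∀ᵐ ω ∂P, 0 ≤ X ω + Y ω := by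
  have hneg : Integrable (fun ω => max (-(X ω + Y ω)) 0) P :=
    hX.neg_part.mono' ((hX.aemeasurable.add hY.aemeasurable).neg.max
      aemeasurable_const).aestronglyMeasurable (ae_of_all _ fun ω => by
        rw [Real.norm_of_nonneg (le_max_right _ _)]
        exact max_le_max (by linarith [show 0 ≤ Y ω from hY0 ω]) le_rfl)
  have hle : ∫ ω, max (-(X ω + Y ω)) 0 ∂P ≤ 0 :=
    ge_of_tendsto' (tendsto_integral_max_add_min_sub hX hY) fun K =>
      integral_max_neg_add_le hX hmean hY hY0 hlaw K.cast_nonneg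
  have hzero := (integral_eq_zero_iff_of_nonneg (fun ω => le_max_right _ _) hneg).1
    (le_antisymm hle (integral_nonneg fun ω => le_max_right _ _))
  filter_upwards [hzero] with ω hω
  simp only [Pi.zero_apply, max_eq_right_iff, neg_nonpos] at hω
  exact hω

lemma lintegral_exp_neg_eq_one_of_map_add_eq (hX : AEMeasurable X P) (hY : Measurable Y)
    (hY0 : 0 ≤ Y) (hXY : IndepFun X Y P) (hlaw : P.map (fun ω => X ω + Y ω) = P.map Y) :
    ∫⁻ ω, ENNReal.ofReal (Real.exp (-X ω)) ∂P = 1 := by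
  set g : ℝ → ENNReal := fun x => ENNReal.ofReal (Real.exp (-x))
  have hg : Measurable g := ENNReal.measurable_ofReal.comp (Real.measurable_exp.comp measurable_neg)
  set c := ∫⁻ ω, g (Y ω) ∂P
  have hc0 : c ≠ 0 := by
    refine ((lintegral_pos_iff_support (hg.comp hY)).2 ?_).ne'
    simp [g, Function.support, Real.exp_pos]
  have hc_top : c ≠ ⊤ := by
    refine (lt_of_le_of_lt (b := ∫⁻ _, 1 ∂P) (lintegral_mono fun ω => ?_) (by simp)).ne
    exact ENNReal.ofReal_le_one.2 (Real.exp_le_one_iff.2 (neg_nonpos.2 (hY0 ω)))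
  have hsum : ∫⁻ ω, g (X ω + Y ω) ∂P = c := by
    rw [← lintegral_map' hg.aemeasurable (g := fun ω => X ω + Y ω) (hX.add hY.aemeasurable), hlaw,
      lintegral_map hg hY]
  have hprod : ∫⁻ ω, g (X ω + Y ω) ∂P = (∫⁻ ω, g (X ω) ∂P) * c := by
    rw [show (∫⁻ ω, g (X ω) ∂P) * c = ∫⁻ ω, ((g ∘ X) * (g ∘ Y)) ω ∂P from
      (lintegral_mul_eq_lintegral_mul_lintegral_of_indepFun' (hg.comp_aemeasurable hX)
        (hg.comp hY).aemeasurable (hXY.comp hg hg)).symm]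
    refine lintegral_congr fun ω => ?_
    simp only [g, Pi.mul_apply, Function.comp_apply, neg_add, Real.exp_add]
    exact ENNReal.ofReal_mul (Real.exp_pos _).le
  exact (ENNReal.mul_eq_right hc0 hc_top).1 (hprod.symm.trans hsum)

lemma ae_eq_zero_of_lintegral_exp_neg_eq_one (hX : Integrable X P)
    (hmean : ∫ ω, X ω ∂P = 0) (h : ∫⁻ ω, ENNReal.ofReal (Real.exp (-X ω)) ∂P = 1) :
    X =ᵐ[P] 0 := by
  have hexp_meas : AEStronglyMeasurable (fun ω => Real.exp (-X ω)) P :=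
    (Real.continuous_exp.comp continuous_neg).comp_aestronglyMeasurable hX.1
  have hexp : Integrable (fun ω => Real.exp (-X ω)) P :=
    ⟨hexp_meas, (hasFiniteIntegral_iff_ofReal (ae_of_all _ fun ω => (Real.exp_pos _).le)).2
      (by rw [h]; exact ENNReal.one_lt_top)⟩
  have hexp_mean : ∫ ω, Real.exp (-X ω) ∂P = 1 := by
    rw [integral_eq_lintegral_of_nonneg_ae (ae_of_all _ fun ω => (Real.exp_pos _).le) hexp_meas,
      h, ENNReal.toReal_one]
  -- `exp (-x) ≥ 1 - x` with equality only at `0`, while both sides have mean `1`.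
  have hgap_nonneg : ∀ ω, 0 ≤ Real.exp (-X ω) + X ω - 1 := fun ω => by
    linarith [Real.add_one_le_exp (-X ω)]
  have hgap_int : Integrable (fun ω => Real.exp (-X ω) + X ω - 1) P :=
    (hexp.add hX).sub (integrable_const 1)
  have hgap : ∫ ω, (Real.exp (-X ω) + X ω - 1) ∂P = 0 := by
    rw [integral_sub (f := fun ω => Real.exp (-X ω) + X ω) (hexp.add hX) (integrable_const 1),
      integral_add hexp hX, hexp_mean, hmean]
    simp
  filter_upwards [(integral_eq_zero_iff_of_nonneg hgap_nonneg hgap_int).1 hgap] with ω hω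
  by_contra hne
  have := Real.add_one_lt_exp (neg_ne_zero.2 hne)
  simp only [Pi.zero_apply] at hω
  linarith

theorem ae_eq_zero_of_map_max_add_eq (hX : Integrable X P) (hmean : ∫ ω, X ω ∂P = 0)
    (hY : Measurable Y) (hY0 : 0 ≤ Y) (hXY : IndepFun X Y P)
    (hlaw : P.map (fun ω => max 0 (X ω + Y ω)) = P.map Y) :
    X =ᵐ[P] 0 := by
  have hmax : (fun ω => max 0 (X ω + Y ω)) =ᵐ[P] fun ω => X ω + Y ω := by
    filter_upwards [ae_add_nonneg_of_map_max_eq hX hmean hY hY0 hlaw] with ω hω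
    exact max_eq_right hω
  refine ae_eq_zero_of_lintegral_exp_neg_eq_one hX hmean ?_
  exact lintegral_exp_neg_eq_one_of_map_add_eq hX.aemeasurable hY hY0 hXY
    ((Measure.map_congr hmax).symm.trans hlaw)

end LindleyFixedPoint

section PartialSums

lemma limsup_coe_eq_top_of_not_bddAbove {a : ℕ → ℝ} (h : ¬BddAbove (Set.range a)) :
    limsup (fun n => (a n : EReal)) atTop = ⊤ := by
  refine (EReal.eq_top_iff_forall_lt _).2 fun y => ?_
  have hfreq : ∃ᶠ n in atTop, ((y + 1 : ℝ) : EReal) ≤ a n := fun hev =>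
    h (IsBoundedUnder.bddAbove_range ⟨y + 1, hev.mono fun n hn => by
      exact_mod_cast (not_le.1 hn).le⟩)
  exact (EReal.coe_lt_coe_iff.2 (lt_add_one y)).trans_le (le_limsup_of_frequently_le hfreq)

lemma liminf_coe_eq_bot_of_not_bddBelow {a : ℕ → ℝ} (h : ¬BddBelow (Set.range a)) :
    liminf (fun n => (a n : EReal)) atTop = ⊥ := by
  refine (EReal.eq_bot_iff_forall_lt _).2 fun y => ?_
  have hfreq : ∃ᶠ n in atTop, (a n : EReal) ≤ ((y - 1 : ℝ) : EReal) := fun hev =>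
    h (IsBoundedUnder.bddBelow_range ⟨y - 1, hev.mono fun n hn => by
      exact_mod_cast (not_le.1 hn).le⟩)
  exact (liminf_le_of_frequently_le hfreq).trans_lt (EReal.coe_lt_coe_iff.2 (sub_one_lt y))

lemma bddAbove_partialSums_shift_iff (x : ℕ → ℝ) (m : ℕ) :
    BddAbove (Set.range fun n => ∑ k ∈ range n, x (m + k)) ↔
      BddAbove (Set.range fun n => ∑ k ∈ range n, x k) := by
  constructor
  · rintro ⟨C, hC⟩
    obtain ⟨D, hD⟩ := ((Set.finite_Iic m).image fun n => ∑ k ∈ range n, x k).bddAbove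
    refine ⟨max D (∑ k ∈ range m, x k + C), ?_⟩
    rintro _ ⟨n, rfl⟩
    rcases le_total n m with hn | hn
    · exact le_max_of_le_left (hD ⟨n, hn, rfl⟩)
    · obtain ⟨j, rfl⟩ := Nat.exists_eq_add_of_le hn
      show ∑ k ∈ range (m + j), x k ≤ _
      rw [sum_range_add]
      exact le_max_of_le_right (by gcongr; exact hC ⟨j, rfl⟩)
  · rintro ⟨C, hC⟩
    refine ⟨C - ∑ k ∈ range m, x k, ?_⟩
    rintro _ ⟨n, rfl⟩
    have := hC ⟨m + n, rfl⟩
    simp only [sum_range_add] at this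
    linarith

/-- The supremum of the partial sums `∑ k < n, x k` over `n ≥ 0`; it is `0` (a junk value) when
they are unbounded above. -/
noncomputable def supPartialSum (x : ℕ → ℝ) : ℝ :=
  ⨆ n, ∑ k ∈ range n, x k

lemma supPartialSum_nonneg (x : ℕ → ℝ) : 0 ≤ supPartialSum x :=
  Real.iSup_nonneg' ⟨0, by simp⟩

lemma measurable_supPartialSum : Measurable supPartialSum :=
  Measurable.iSup fun _ => Finset.measurable_sum _ fun k _ => measurable_pi_apply k

lemma supPartialSum_eq_max {x : ℕ → ℝ} (h : BddAbove (Set.range fun n => ∑ k ∈ range n, x k)) :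
    supPartialSum x = max 0 (x 0 + supPartialSum fun k => x (k + 1)) := by
  have hsucc : ∀ n, ∑ k ∈ range (n + 1), x k = x 0 + ∑ k ∈ range n, x (k + 1) := fun n => by
    rw [sum_range_succ', add_comm]
  have h' : BddAbove (Set.range fun n => ∑ k ∈ range n, x (k + 1)) := by
    simpa only [add_comm _ 1] using (bddAbove_partialSums_shift_iff x 1).2 h
  apply le_antisymm
  · refine ciSup_le fun n => ?_
    cases n with
    | zero => simp
    | succ n => rw [hsucc]; exact le_max_of_le_right (by gcongr; exact le_ciSup h' n)
  · refine max_le (le_ciSup_of_le h 0 (by simp)) ?_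
    rw [← le_sub_iff_add_le']
    exact ciSup_le fun n => le_sub_iff_add_le'.2 (hsucc n ▸ le_ciSup h (n + 1))

end PartialSums

section IndependentSequence

variable {Ω β : Type*} {mΩ : MeasurableSpace Ω} [MeasurableSpace β] {P : Measure Ω}
  {W : ℕ → Ω → β}

lemma iIndepFun.indepFun_tail (hmeas : ∀ n, Measurable (W n)) (hindep : iIndepFun W P) :
    IndepFun (W 0) (fun ω i => W (i + 1) ω) P := by
  let σ : ℕ → MeasurableSpace Ω := fun i => MeasurableSpace.comap (W i) ‹_›
  have hindep' : Indep (⨆ i ∈ ({0} : Set ℕ), σ i) (⨆ i ∈ {i : ℕ | 1 ≤ i}, σ i) P :=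
    indep_iSup_of_disjoint (fun i => (hmeas i).comap_le) hindep.iIndep (by simp)
  rw [IndepFun_iff_Indep]
  refine indep_of_indep_of_le_left (indep_of_indep_of_le_right hindep' ?_)
    (le_iSup₂ (f := fun i (_ : i ∈ ({0} : Set ℕ)) => σ i) 0 rfl)
  exact Measurable.comap_le (@measurable_pi_lambda Ω ℕ (fun _ => β) (⨆ i ∈ {i : ℕ | 1 ≤ i}, σ i)
    _ _ fun i => Measurable.of_comap_le
      (le_iSup₂ (f := fun i (_ : i ∈ {i : ℕ | 1 ≤ i}) => σ i) (i + 1) (Nat.le_add_left 1 i)))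

lemma map_tail_eq_map (hmeas : ∀ n, Measurable (W n)) (hindep : iIndepFun W P)
    (hident : ∀ n, P.map (W n) = P.map (W 0)) :
    P.map (fun ω i => W (i + 1) ω) = P.map (fun ω i => W i ω) := by
  rw [(hindep.precomp (add_left_injective 1)).map_fun_eq_infinitePi_map fun i => hmeas _,
    hindep.map_fun_eq_infinitePi_map hmeas]
  simp only [hident]

end IndependentSequence

section RandomWalk

variable {Ω : Type*} {mΩ : MeasurableSpace Ω}

lemma measurableSet_limsup_bddAbove_partialSums (W : ℕ → Ω → ℝ) :
    MeasurableSet[limsup (fun n => MeasurableSpace.comap (W n) inferInstance) atTop]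
      {ω | BddAbove (Set.range fun n => ∑ k ∈ range n, W k ω)} := by
  rw [limsup_eq_iInf_iSup_of_nat, MeasurableSpace.measurableSet_iInf]
  intro m
  have hshift : {ω | BddAbove (Set.range fun n => ∑ k ∈ range n, W k ω)} =
      {ω | BddAbove (Set.range fun n => ∑ k ∈ range n, W (m + k) ω)} := by
    ext ω; exact (bddAbove_partialSums_shift_iff _ m).symm
  rw [hshift]
  refine measurableSet_bddAbove_range fun n => Finset.measurable_sum _ fun k _ => ?_
  exact Measurable.of_comap_le
    (le_iSup₂ (f := fun i (_ : i ≥ m) => MeasurableSpace.comap (W i) inferInstance) (m + k)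
      (Nat.le_add_right m k))

variable {P : Measure Ω} [IsProbabilityMeasure P] {W : ℕ → Ω → ℝ}

theorem ae_not_bddAbove_partialSums (hmeas : ∀ n, Measurable (W n)) (hindep : iIndepFun W P)
    (hident : ∀ n, P.map (W n) = P.map (W 0)) (hint : Integrable (W 0) P)
    (hmean : ∫ ω, W 0 ω ∂P = 0) (hnonzero : 0 < P {ω | W 0 ω ≠ 0}) :
    ∀ᵐ ω ∂P, ¬BddAbove (Set.range fun n => ∑ k ∈ range n, W k ω) := by
  rcases measure_zero_or_one_of_measurableSet_limsup_atTop (fun n => (hmeas n).comap_le)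
    hindep.iIndep (measurableSet_limsup_bddAbove_partialSums W) with h0 | h1
  · exact measure_eq_zero_iff_ae_notMem.1 h0
  exfalso
  have hbdd : ∀ᵐ ω ∂P, BddAbove (Set.range fun n => ∑ k ∈ range n, W k ω) :=
    (ae_iff_measure_eq (measurableSet_bddAbove_range fun n =>
      Finset.measurable_sum _ fun k _ => hmeas k).nullMeasurableSet).2 (by simpa using h1)
  have hseq : Measurable fun ω i => W i ω := measurable_pi_lambda _ hmeas
  have htail : Measurable fun ω i => W (i + 1) ω := measurable_pi_lambda _ fun i => hmeas _
  have hlindley : (fun ω => max 0 (W 0 ω + supPartialSum fun k => W (k + 1) ω)) =ᵐ[P]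
      fun ω => supPartialSum fun k => W k ω :=
    hbdd.mono fun ω hω => (supPartialSum_eq_max hω).symm
  have hlaw : P.map (fun ω => max 0 (W 0 ω + supPartialSum fun k => W (k + 1) ω)) =
      P.map (fun ω => supPartialSum fun k => W (k + 1) ω) := by
    have hmax := Measure.map_map (μ := P) measurable_supPartialSum hseq
    have hmax_tail := Measure.map_map (μ := P) measurable_supPartialSum htail
    rw [map_tail_eq_map hmeas hindep hident] at hmax_tail
    rw [Measure.map_congr hlindley]
    exact hmax.symm.trans hmax_tail
  have hW0 := ae_eq_zero_of_map_max_add_eq hint hmean (measurable_supPartialSum.comp htail)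
    (fun ω => supPartialSum_nonneg _)
    ((iIndepFun.indepFun_tail hmeas hindep).comp measurable_id measurable_supPartialSum) hlaw
  exact hnonzero.ne' (ae_iff.1 hW0)

end RandomWalk

/-- Oscillation part of the Chung–Fuchs theorem: an i.i.d. mean-zero real random walk
with `P(W₁ ≠ 0) > 0` oscillates: a.s. `liminf Sₙ = -∞` and `limsup Sₙ = +∞`. -/
theorem chung_fuchs_oscillates
    {Ω : Type*} [MeasurableSpace Ω] (P : Measure Ω) [IsProbabilityMeasure P]
    (W : ℕ → Ω → ℝ) (hmeas : ∀ n, Measurable (W n))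
    (hindep : iIndepFun W P)
    (hident : ∀ n, Measure.map (W n) P = Measure.map (W 0) P)
    (hint : Integrable (W 0) P) (hmean : ∫ ω, W 0 ω ∂P = 0)
    (hnonzero : 0 < P {ω | W 0 ω ≠ 0}) :
    ∀ᵐ ω ∂P,
      liminf (fun n => ((∑ k ∈ Finset.range n, W k ω : ℝ) : EReal)) atTop = ⊥ ∧
      limsup (fun n => ((∑ k ∈ Finset.range n, W k ω : ℝ) : EReal)) atTop = ⊤ := by
  have hup := ae_not_bddAbove_partialSums hmeas hindep hident hint hmean hnonzero
  have hdown := ae_not_bddAbove_partialSums (W := fun n ω => -W n ω) (fun n => (hmeas n).neg)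
    (hindep.comp (fun _ x => -x) fun _ => measurable_neg)
    (fun n => by
      simpa only [Measure.map_map measurable_neg (hmeas _), Function.comp_def] using
        congrArg (Measure.map Neg.neg) (hident n))
    hint.neg (by rw [integral_neg, hmean, neg_zero]) (by simpa using hnonzero)
  filter_upwards [hup, hdown] with ω hup hdown
  refine ⟨liminf_coe_eq_bot_of_not_bddBelow fun ⟨C, hC⟩ => hdown ⟨-C, ?_⟩,
    limsup_coe_eq_top_of_not_bddAbove hup⟩
  rintro _ ⟨n, rfl⟩
  simpa [sum_neg_distrib] using hC ⟨n, rfl⟩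
end

section
/- For an i.i.d. real random walk Sₙ = W₁ + ⋯ + Wₙ, the set of recurrent points {a ∈ ℝ : for all ε > 0, ℙ(|Sₙ − a| < ε i.o.) = 1} is a closed additive subgroup of ℝ; hence it is either empty, all of ℝ, or a lattice aℤ. -/
open MeasureTheory ProbabilityTheory Filter Finset

/-!
Closedness is immediate from the definition. For the subgroup property let `x, y` be recurrent
and `ε > 0`. Since the walk comes near `y`, some time `m` has `P(|S_m - y| < ε/2) > 0`. On that
event, whenever `|S_n - x| < ε/2` the increment `S_n - S_m` of the restarted walk `(W (m + k))_k`
is within `ε` of `x - y`. So the restarted walk visits the `ε`-ball around `x - y` infinitely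
often almost surely on an event of positive probability that is independent of it; hence almost
surely outright, and since it has the law of the original walk, `x - y` is recurrent. A closed
subgroup of `ℝ` is either dense, hence all of `ℝ`, or cyclic.
-/

def frequentlyNear (a ε : ℝ) : Set (ℕ → ℝ) :=
  {v | ∃ᶠ n in atTop, |(∑ k ∈ range n, v k) - a| < ε}

def recurrentPoints {Ω : Type*} [MeasurableSpace Ω] (P : Measure Ω) (W : ℕ → Ω → ℝ) :
    Set ℝ :=
  {a | ∀ ε : ℝ, 0 < ε → ∀ᵐ ω ∂P, (fun k => W k ω) ∈ frequentlyNear a ε}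

theorem measurableSet_setOf_frequently {α : Type*} [MeasurableSpace α] {s : ℕ → Set α}
    (hs : ∀ n, MeasurableSet (s n)) : MeasurableSet {x | ∃ᶠ n in atTop, x ∈ s n} := by
  rw [show {x | ∃ᶠ n in atTop, x ∈ s n} = limsup s atTop from
    Set.ext fun _ => mem_limsup_iff_frequently_mem.symm]
  exact MeasurableSet.measurableSet_limsup hs

theorem measurableSet_frequentlyNear (a ε : ℝ) : MeasurableSet (frequentlyNear a ε) :=
  measurableSet_setOf_frequently fun _ => measurableSet_lt
    ((Finset.measurable_sum _ fun k _ => measurable_pi_apply k).sub_const a).abs measurable_const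

theorem shift_mem_frequentlyNear {v : ℕ → ℝ} {m : ℕ} {x y δ η : ℝ}
    (hm : |(∑ k ∈ range m, v k) - y| < δ) (hv : v ∈ frequentlyNear x η) :
    (fun k => v (m + k)) ∈ frequentlyNear (x - y) (η + δ) := by
  refine (tendsto_sub_atTop_nat m).frequently
    ((hv.and_eventually (eventually_ge_atTop m)).mono fun n ⟨hn, hmn⟩ => ?_)
  have hsplit :
      ∑ k ∈ range n, v k = ∑ k ∈ range m, v k + ∑ k ∈ range (n - m), v (m + k) := by
    rw [← sum_range_add, Nat.add_sub_cancel' hmn]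
  rw [abs_lt] at hm hn ⊢
  constructor <;> linarith

theorem frequentlyNear_subset_of_abs_sub_lt {a b δ η : ℝ} (hab : |a - b| < δ) :
    frequentlyNear b η ⊆ frequentlyNear a (η + δ) := fun v hv =>
  hv.mono fun n hn => by rw [abs_lt] at hab hn ⊢; constructor <;> linarith

section IID

variable {Ω E : Type*} [MeasurableSpace Ω] [MeasurableSpace E] {P : Measure Ω}
  {W : ℕ → Ω → E}

theorem ProbabilityTheory.iIndepFun.map_shift_eq (hmeas : ∀ n, Measurable (W n))
    (hindep : iIndepFun W P) (hident : ∀ n, P.map (W n) = P.map (W 0)) (m : ℕ) :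
    P.map (fun ω k => W (m + k) ω) = P.map (fun ω k => W k ω) := by
  rw [hindep.map_fun_eq_infinitePi_map hmeas,
    (hindep.precomp (add_right_injective m)).map_fun_eq_infinitePi_map fun k => hmeas (m + k)]
  simp only [hident]

theorem ProbabilityTheory.iIndepFun.indepFun_prefix_shift (hmeas : ∀ n, Measurable (W n))
    (hindep : iIndepFun W P) (m : ℕ) :
    IndepFun (fun ω (i : Fin m) => W i ω) (fun ω k => W (m + k) ω) P := by
  have hpast_future := indep_iSup_of_disjoint (fun n => (hmeas n).comap_le) hindep
    (Set.Iio_disjoint_Ici (le_refl m))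
  have hmeas_iSup {S : Set ℕ} {n : ℕ} (hn : n ∈ S) :
      Measurable[⨆ i ∈ S, MeasurableSpace.comap (W i) inferInstance] (W n) :=
    Measurable.of_comap_le (le_biSup (fun i => MeasurableSpace.comap (W i) inferInstance) hn)
  rw [IndepFun_iff_Indep]
  refine indep_of_indep_of_le_right (indep_of_indep_of_le_left hpast_future ?_) ?_
  -- `measurable_pi_lambda` takes the σ-algebra on `Ω` as an instance, so it is passed by hand.
  · exact (@measurable_pi_lambda _ _ _ (_) _ _ fun i : Fin m =>
      hmeas_iSup (S := Set.Iio m) i.isLt).comap_le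
  · exact (@measurable_pi_lambda _ _ _ (_) _ _ fun k =>
      hmeas_iSup (S := Set.Ici m) (Nat.le_add_right m k)).comap_le

end IID

theorem ae_mem_of_ae_le_of_indep {Ω : Type*} [MeasurableSpace Ω] {P : Measure Ω}
    [IsProbabilityMeasure P] {A C : Set Ω} (hC : MeasurableSet C) (hA : P A ≠ 0)
    (hAC : A ≤ᵐ[P] C) (hind : P (A ∩ C) = P A * P C) : ∀ᵐ ω ∂P, ω ∈ C := by
  have hinter : P (A ∩ C) = P A := by
    rw [← measure_inter_add_sdiff A hC, ae_le_set.1 hAC, add_zero]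
  rw [hinter, eq_comm, ENNReal.mul_eq_left hA (measure_ne_top P A)] at hind
  exact (mem_ae_iff_prob_eq_one hC).2 hind

theorem exists_measure_ne_zero_of_ae_exists {Ω ι : Type*} [MeasurableSpace Ω] [Countable ι]
    {P : Measure Ω} [NeZero P] {p : ι → Ω → Prop} (h : ∀ᵐ ω ∂P, ∃ i, p i ω) :
    ∃ i, P {ω | p i ω} ≠ 0 := by
  by_contra! hnull
  have hnone : ∀ᵐ ω ∂P, ∀ i, ¬ p i ω :=
    ae_all_iff.2 fun i => measure_eq_zero_iff_ae_notMem.1 (hnull i)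
  obtain ⟨ω, ⟨i, hi⟩, hnot⟩ := (h.and hnone).exists
  exact hnot i hi

theorem isClosed_recurrentPoints {Ω : Type*} [MeasurableSpace Ω] (P : Measure Ω)
    (W : ℕ → Ω → ℝ) : IsClosed (recurrentPoints P W) := by
  refine isClosed_of_closure_subset fun a ha ε hε => ?_
  obtain ⟨b, hb, hab⟩ := Metric.mem_closure_iff.1 ha (ε / 2) (half_pos hε)
  rw [Real.dist_eq] at hab
  filter_upwards [hb (ε / 2) (half_pos hε)] with ω hω
  simpa only [add_halves] using frequentlyNear_subset_of_abs_sub_lt hab hω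

theorem sub_mem_recurrentPoints {Ω : Type*} [MeasurableSpace Ω] {P : Measure Ω}
    [IsProbabilityMeasure P] {W : ℕ → Ω → ℝ} (hmeas : ∀ n, Measurable (W n))
    (hindep : iIndepFun W P) (hident : ∀ n, P.map (W n) = P.map (W 0)) {x y : ℝ}
    (hx : x ∈ recurrentPoints P W) (hy : y ∈ recurrentPoints P W) :
    x - y ∈ recurrentPoints P W := by
  intro ε hε
  obtain ⟨m, hm⟩ : ∃ m, P {ω | |(∑ k ∈ range m, W k ω) - y| < ε / 2} ≠ 0 :=
    exists_measure_ne_zero_of_ae_exists ((hy _ (half_pos hε)).mono fun _ h => h.exists)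
  have hpast : {ω | |(∑ k ∈ range m, W k ω) - y| < ε / 2}
      = (fun ω (i : Fin m) => W i ω) ⁻¹' {u | |(∑ i, u i) - y| < ε / 2} := by
    ext ω
    simp only [Set.mem_ofPred_eq, Set.mem_preimage, Fin.sum_univ_eq_sum_range (W · ω)]
  have hfuture : Measurable fun ω k => W (m + k) ω :=
    measurable_pi_lambda _ fun k => hmeas (m + k)
  have hG := measurableSet_frequentlyNear (x - y) ε
  suffices h : ∀ᵐ ω ∂P, (fun k => W (m + k) ω) ∈ frequentlyNear (x - y) ε by
    have h_law := (mem_ae_map_iff hfuture.aemeasurable hG).2 h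
    rw [hindep.map_shift_eq hmeas hident m] at h_law
    exact mem_ae_of_mem_ae_map (measurable_pi_lambda _ hmeas).aemeasurable h_law
  refine ae_mem_of_ae_le_of_indep (hfuture hG) (hpast ▸ hm) ?_
    ((hindep.indepFun_prefix_shift hmeas m).measure_inter_preimage_eq_mul _ _
      (measurableSet_lt (by fun_prop) measurable_const) hG)
  filter_upwards [hx _ (half_pos hε)] with ω hωx hωm
  rw [← hpast] at hωm
  have h := shift_mem_frequentlyNear hωm hωx
  rwa [add_halves] at h

theorem AddSubgroup.coe_eq_univ_or_exists_eq_zmultiples_of_isClosed {G : Type*}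
    [AddCommGroup G] [LinearOrder G] [IsOrderedAddMonoid G] [TopologicalSpace G]
    [OrderTopology G] [Archimedean G] {H : AddSubgroup G} (hH : IsClosed (H : Set G)) :
    (H : Set G) = Set.univ ∨ ∃ a, H = AddSubgroup.zmultiples a :=
  H.dense_or_cyclic.imp (fun hdense => by rw [← hH.closure_eq, hdense.closure_eq])
    fun ⟨a, ha⟩ => ⟨a, ha.trans (AddSubgroup.zmultiples_eq_closure a).symm⟩

/-- For an i.i.d. real random walk, the set of recurrent points
`{a : ∀ ε > 0, P(|Sₙ - a| < ε i.o.) = 1}` is closed, and is (if nonempty) an additive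
subgroup of `ℝ`; hence it is either empty, all of `ℝ`, or a lattice `aℤ`. -/
theorem recurrent_points_closed_subgroup
    {Ω : Type*} [MeasurableSpace Ω] (P : Measure Ω) [IsProbabilityMeasure P]
    (W : ℕ → Ω → ℝ) (hmeas : ∀ n, Measurable (W n))
    (hindep : iIndepFun W P)
    (hident : ∀ n, Measure.map (W n) P = Measure.map (W 0) P)
    (R : Set ℝ)
    (hR : R = {a : ℝ | ∀ ε : ℝ, 0 < ε →
      ∀ᵐ ω ∂P, ∃ᶠ n in atTop, |(∑ k ∈ Finset.range n, W k ω) - a| < ε}) :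
    IsClosed R ∧
    (R.Nonempty → ∃ H : AddSubgroup ℝ, (H : Set ℝ) = R) ∧
    (R = ∅ ∨ R = Set.univ ∨ ∃ a : ℝ, R = {x : ℝ | ∃ k : ℤ, x = a * k}) := by
  replace hR : R = recurrentPoints P W := hR
  have hclosed : IsClosed R := hR ▸ isClosed_recurrentPoints P W
  have hsub : ∀ x ∈ R, ∀ y ∈ R, x + -y ∈ R := by
    subst hR
    exact fun x hx y hy => sub_eq_add_neg x y ▸ sub_mem_recurrentPoints hmeas hindep hident hx hy
  refine ⟨hclosed, fun hne => ⟨AddSubgroup.ofSub R hne hsub, rfl⟩, ?_⟩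
  rcases R.eq_empty_or_nonempty with hempty | hne
  · exact Or.inl hempty
  rcases (AddSubgroup.ofSub R hne hsub).coe_eq_univ_or_exists_eq_zmultiples_of_isClosed hclosed
    with huniv | ⟨a, ha⟩
  · exact Or.inr (Or.inl huniv)
  · refine Or.inr (Or.inr ⟨a, Set.ext fun x => ?_⟩)
    change x ∈ AddSubgroup.ofSub R hne hsub ↔ _
    rw [ha, AddSubgroup.mem_zmultiples_iff]
    simp only [Set.mem_ofPred_eq, zsmul_eq_mul, mul_comm, eq_comm]
end

section
/- Let (X, ℬ, T, μ) be an ergodic measure-preserving dynamical system with μ(X)=1 and f : X → ℝ measurable with μ(limₙ Sₙf/n = 0) = 1, where Sₙf = f + f∘T + ⋯ + f∘T^{n−1}. Then Sf is recurrent: for all c > 0, μ(|Sₙf| ≤ c for infinitely many n) = 1. -/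
/-!
Let `B_ε` be the set of points from which the walk `Sₙ = birkhoffSum T f n` never comes back
within `ε` of its starting value. Along one orbit, the times `n < N` at which `Tⁿ x ∈ B_ε` have
pairwise `ε`-separated values `Sₙ x`, all of size `o(N)` because `Sₙ/n → 0`; hence the
frequency of visits to `B_ε` tends to `0`. Since `T` preserves `μ`, the mean of that frequency
is `μ(B_ε)`, so dominated convergence gives `μ(B_ε) = 0`. Thus almost every walk comes back
within every `ε` from every time `m`, and chaining returns within `c/2, c/4, …` yields
infinitely many `n` with `|Sₙ x| ≤ c`.
-/

open MeasureTheory Filter Finset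

theorem frequently_abs_sub_le_of_forall_exists_near {s : ℕ → ℝ}
    (h : ∀ m, ∀ ε > 0, ∃ n > m, |s n - s m| ≤ ε) {c : ℝ} (hc : 0 < c) :
    ∃ᶠ n in atTop, |s n - s 0| ≤ c := by
  have key : ∀ j : ℕ, ∃ N ≥ j, |s N - s 0| ≤ c * (1 - (1 / 2) ^ j) := by
    intro j
    induction j with
    | zero => exact ⟨0, le_rfl, by simp⟩
    | succ j ih =>
      obtain ⟨N, hNj, hN⟩ := ih
      obtain ⟨n, hnN, hn⟩ := h N (c * (1 / 2) ^ (j + 1)) (by positivity)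
      refine ⟨n, by omega, ?_⟩
      calc |s n - s 0| ≤ |s n - s N| + |s N - s 0| := abs_sub_le _ _ _
        _ ≤ c * (1 / 2) ^ (j + 1) + c * (1 - (1 / 2) ^ j) := add_le_add hn hN
        _ = c * (1 - (1 / 2) ^ (j + 1)) := by ring
  refine frequently_atTop.2 fun j => ?_
  obtain ⟨N, hNj, hN⟩ := key j
  exact ⟨N, hNj, hN.trans (mul_le_of_le_one_right hc.le (by simp))⟩

theorem Finset.card_le_of_pairwise_lt_abs_sub {ι : Type*} {V : Finset ι} {g : ι → ℝ} {ε b : ℝ}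
    (hε : 0 < ε) (hb₀ : 0 ≤ b) (hsep : (V : Set ι).Pairwise fun m n => ε < |g m - g n|)
    (hb : ∀ n ∈ V, |g n| ≤ b) :
    (#V : ℝ) ≤ 2 * b / ε + 1 := by
  set bin : ι → ℕ := fun n => ⌊(g n + b) / ε⌋₊
  have hmaps : ∀ n ∈ V, bin n ∈ range (⌊2 * b / ε⌋₊ + 1) := by
    intro n hn
    have := abs_le.1 (hb n hn)
    exact mem_range.2 (Nat.lt_succ_of_le (Nat.floor_mono (by gcongr; linarith)))
  have hinj : Set.InjOn bin V := by
    intro m hm n hn hmn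
    by_contra hne
    have hnonneg : ∀ k ∈ V, 0 ≤ (g k + b) / ε := fun k hk =>
      div_nonneg (by linarith [(abs_le.1 (hb k hk)).1]) hε.le
    have hfloor : ⌊(g m + b) / ε⌋ = ⌊(g n + b) / ε⌋ := by
      rw [← Int.natCast_floor_eq_floor (hnonneg m hm),
        ← Int.natCast_floor_eq_floor (hnonneg n hn)]
      exact congrArg _ hmn
    have := Int.abs_sub_lt_one_of_floor_eq_floor hfloor
    rw [← sub_div, add_sub_add_right_eq_sub, abs_div, abs_of_pos hε, div_lt_one hε] at this
    exact (hsep hm hn hne).not_gt this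
  calc (#V : ℝ) ≤ ⌊2 * b / ε⌋₊ + 1 := by
        exact_mod_cast card_le_card_of_injOn bin hmaps hinj |>.trans (by simp)
    _ ≤ 2 * b / ε + 1 := by
      gcongr
      exact Nat.floor_le (by positivity)

theorem eventually_forall_lt_abs_le_mul_of_tendsto_div {u : ℕ → ℝ}
    (h : Tendsto (fun n => u n / n) atTop (nhds 0)) {δ : ℝ} (hδ : 0 < δ) :
    ∀ᶠ N : ℕ in atTop, ∀ n < N, |u n| ≤ δ * N := by
  have hlo : u =o[atTop] fun n : ℕ => (n : ℝ) :=
    (Asymptotics.isLittleO_iff_tendsto' <| (eventually_ne_atTop 0).mono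
      fun n hn h0 => absurd (Nat.cast_eq_zero.1 h0) hn).2 h
  obtain ⟨K, hK⟩ := eventually_atTop.1 (hlo.bound hδ)
  set C := ∑ n ∈ range K, |u n|
  filter_upwards [eventually_ge_atTop ⌈C / δ⌉₊] with N hN n hn
  rcases lt_or_ge n K with hnK | hKn
  · calc |u n| ≤ C := single_le_sum (fun i _ => abs_nonneg (u i)) (mem_range.2 hnK)
      _ ≤ δ * N := (div_le_iff₀' hδ).1 ((Nat.le_ceil _).trans (by exact_mod_cast hN))
  · calc |u n| ≤ δ * n := by simpa using hK n hKn
      _ ≤ δ * N := by gcongr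

theorem Measurable.birkhoffSum {X M : Type*} [MeasurableSpace X] [AddCommMonoid M]
    [MeasurableSpace M] [MeasurableAdd₂ M] {T : X → X} {g : X → M}
    (hg : Measurable g) (hT : Measurable T) (n : ℕ) : Measurable (birkhoffSum T g n) :=
  Finset.measurable_sum _ fun k _ => hg.comp (hT.iterate k)

theorem MeasureTheory.MeasurePreserving.integral_birkhoffSum {X E : Type*} [MeasurableSpace X]
    [NormedAddCommGroup E] [NormedSpace ℝ E] {μ : Measure X} {T : X → X} {g : X → E}
    (hT : MeasurePreserving T μ μ) (hg : Integrable g μ) (n : ℕ) :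
    ∫ x, birkhoffSum T g n x ∂μ = n • ∫ x, g x ∂μ := by
  have hcomp : ∀ k, ∫ x, g (T^[k] x) ∂μ = ∫ x, g x ∂μ := fun k => by
    rw [← integral_map (hT.iterate k).measurable.aemeasurable
      ((hT.iterate k).map_eq.symm ▸ hg.aestronglyMeasurable), (hT.iterate k).map_eq]
  simp only [birkhoffSum]
  rw [integral_finsetSum (f := fun k x => g (T^[k] x)) _
    fun k _ => (hT.iterate k).integrable_comp_of_integrable hg]
  simp [hcomp]

theorem MeasureTheory.MeasurePreserving.integral_birkhoffAverage {X E : Type*}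
    [MeasurableSpace X] [NormedAddCommGroup E] [NormedSpace ℝ E] {μ : Measure X} {T : X → X}
    {g : X → E} (hT : MeasurePreserving T μ μ) (hg : Integrable g μ) {n : ℕ} (hn : n ≠ 0) :
    ∫ x, birkhoffAverage ℝ T g n x ∂μ = ∫ x, g x ∂μ := by
  simp only [birkhoffAverage]
  rw [integral_smul, hT.integral_birkhoffSum hg, ← Nat.cast_smul_eq_nsmul ℝ n, smul_smul,
    inv_mul_cancel₀ (Nat.cast_ne_zero.2 hn), one_smul]

open scoped Classical in
theorem birkhoffSum_indicator_one_eq_card {X : Type*} (T : X → X) (B : Set X) (N : ℕ) (x : X) :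
    birkhoffSum T (B.indicator (1 : X → ℝ)) N x = #{n ∈ range N | T^[n] x ∈ B} := by
  simp only [birkhoffSum, Set.indicator_apply, Pi.one_apply, ← sum_boole]

theorem birkhoffAverage_indicator_one_mem_Icc {X : Type*} (T : X → X) (B : Set X) (N : ℕ)
    (x : X) : birkhoffAverage ℝ T (B.indicator (1 : X → ℝ)) N x ∈ Set.Icc 0 1 := by
  classical
  rw [birkhoffAverage, smul_eq_mul, birkhoffSum_indicator_one_eq_card, inv_mul_eq_div]
  refine ⟨by positivity, div_le_one_of_le₀ ?_ N.cast_nonneg⟩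
  exact_mod_cast (card_filter_le _ _).trans (card_range N).le

section Recurrence

variable {X : Type*} {T : X → X} {f : X → ℝ} {ε : ℝ}

def nonReturnSet (T : X → X) (f : X → ℝ) (ε : ℝ) : Set X :=
  {x | ∀ n, 0 < n → ε < |birkhoffSum T f n x|}

theorem measurableSet_nonReturnSet [MeasurableSpace X] (hT : Measurable T) (hf : Measurable f)
    (ε : ℝ) :
    MeasurableSet (nonReturnSet T f ε) := by
  simp only [nonReturnSet, Set.ofPred_forall]
  exact .iInter fun n => .iInter fun _ =>
    measurableSet_lt measurable_const (hf.birkhoffSum hT n).abs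

theorem lt_abs_birkhoffSum_sub_of_iterate_mem_nonReturnSet {x : X} {m n : ℕ} (hmn : m < n)
    (hm : T^[m] x ∈ nonReturnSet T f ε) :
    ε < |birkhoffSum T f n x - birkhoffSum T f m x| := by
  obtain ⟨k, hk, rfl⟩ : ∃ k, 0 < k ∧ n = m + k := ⟨n - m, by omega, by omega⟩
  rw [birkhoffSum_add, add_sub_cancel_left]
  exact hm k hk

open scoped Classical in
theorem card_visits_nonReturnSet_le {x : X} {N : ℕ} {b : ℝ} (hε : 0 < ε) (hb₀ : 0 ≤ b)
    (hb : ∀ n < N, |birkhoffSum T f n x| ≤ b) :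
    (#{n ∈ range N | T^[n] x ∈ nonReturnSet T f ε} : ℝ) ≤ 2 * b / ε + 1 := by
  refine card_le_of_pairwise_lt_abs_sub hε hb₀ ?_ fun n hn =>
    hb n (mem_range.1 (mem_filter.1 hn).1)
  intro m hm n hn hmn
  rcases hmn.lt_or_gt with h | h
  · rw [abs_sub_comm]
    exact lt_abs_birkhoffSum_sub_of_iterate_mem_nonReturnSet h (mem_filter.1 hm).2
  · exact lt_abs_birkhoffSum_sub_of_iterate_mem_nonReturnSet h (mem_filter.1 hn).2

theorem tendsto_birkhoffAverage_indicator_nonReturnSet {x : X} (hε : 0 < ε)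
    (hx : Tendsto (fun n => birkhoffSum T f n x / n) atTop (nhds 0)) :
    Tendsto (fun N => birkhoffAverage ℝ T ((nonReturnSet T f ε).indicator (1 : X → ℝ)) N x)
      atTop (nhds 0) := by
  classical
  refine tendsto_order.2 ⟨fun a ha => Eventually.of_forall fun N =>
    ha.trans_le (birkhoffAverage_indicator_one_mem_Icc T _ N x).1, fun a ha => ?_⟩
  have hδ : 0 < a * ε / 4 := by positivity
  filter_upwards [eventually_forall_lt_abs_le_mul_of_tendsto_div hx hδ,
    eventually_gt_atTop ⌈2 / a⌉₊] with N hbound hN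
  have hNpos : (0 : ℝ) < N := by exact_mod_cast (Nat.zero_le _).trans_lt hN
  have h2N : 2 / a < N := (Nat.le_ceil _).trans_lt (by exact_mod_cast hN)
  rw [birkhoffAverage, smul_eq_mul, birkhoffSum_indicator_one_eq_card, inv_mul_eq_div,
    div_lt_iff₀ hNpos]
  calc _ ≤ 2 * (a * ε / 4 * N) / ε + 1 := card_visits_nonReturnSet_le hε (by positivity) hbound
    _ = a / 2 * N + 1 := by field_simp; ring
    _ < a * N := by rw [div_lt_iff₀ ha] at h2N; linarith

variable [MeasurableSpace X]

theorem measure_nonReturnSet_eq_zero {μ : Measure X} [IsFiniteMeasure μ]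
    (hT : MeasurePreserving T μ μ) (hf : Measurable f)
    (hlim : ∀ᵐ x ∂μ, Tendsto (fun n => birkhoffSum T f n x / n) atTop (nhds 0)) (hε : 0 < ε) :
    μ (nonReturnSet T f ε) = 0 := by
  set B := nonReturnSet T f ε
  have hB : MeasurableSet B := measurableSet_nonReturnSet hT.measurable hf ε
  have hint : ∀ N ≠ 0, ∫ x, birkhoffAverage ℝ T (B.indicator (1 : X → ℝ)) N x ∂μ = μ.real B :=
    fun N hN => by
      rw [hT.integral_birkhoffAverage ((integrable_const 1).indicator hB) hN,
        integral_indicator_one hB]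
  have hlim_int : Tendsto (fun N => ∫ x, birkhoffAverage ℝ T (B.indicator (1 : X → ℝ)) N x ∂μ)
      atTop (nhds 0) := by
    have hmeas (N : ℕ) : Measurable (birkhoffAverage ℝ T (B.indicator (1 : X → ℝ)) N) :=
      ((measurable_one.indicator hB).birkhoffSum hT.measurable N).const_smul (N : ℝ)⁻¹
    simpa using tendsto_integral_of_dominated_convergence (fun _ => (1 : ℝ))
      (fun N => (hmeas N).aestronglyMeasurable)
      (integrable_const 1)
      (fun N => Eventually.of_forall fun x => by
        obtain ⟨h0, h1⟩ := birkhoffAverage_indicator_one_mem_Icc T B N x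
        rwa [Real.norm_eq_abs, abs_of_nonneg h0])
      (hlim.mono fun x hx => tendsto_birkhoffAverage_indicator_nonReturnSet hε hx)
  have hreal : μ.real B = 0 := tendsto_nhds_unique
    (tendsto_const_nhds.congr' <| (eventually_ne_atTop 0).mono fun N hN => (hint N hN).symm)
    hlim_int
  exact (measureReal_eq_zero_iff).1 hreal

theorem ae_forall_exists_abs_birkhoffSum_sub_le {μ : Measure X} [IsFiniteMeasure μ]
    (hT : MeasurePreserving T μ μ) (hf : Measurable f)
    (hlim : ∀ᵐ x ∂μ, Tendsto (fun n => birkhoffSum T f n x / n) atTop (nhds 0)) :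
    ∀ᵐ x ∂μ, ∀ m, ∀ ε > 0, ∃ n > m, |birkhoffSum T f n x - birkhoffSum T f m x| ≤ ε := by
  have hreturn : ∀ m k : ℕ, ∀ᵐ x ∂μ, T^[m] x ∉ nonReturnSet T f (1 / (k + 1)) :=
    fun m k => (hT.iterate m).quasiMeasurePreserving.ae <| measure_eq_zero_iff_ae_notMem.1 <|
      measure_nonReturnSet_eq_zero hT hf hlim (by positivity)
  filter_upwards [ae_all_iff.2 fun m => ae_all_iff.2 (hreturn m)] with x hx m ε hε
  obtain ⟨k, hk⟩ := exists_nat_one_div_lt hε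
  obtain ⟨n, hn, hle⟩ : ∃ n, 0 < n ∧ |birkhoffSum T f n (T^[m] x)| ≤ 1 / (k + 1) := by
    simpa [nonReturnSet] using hx m k
  refine ⟨m + n, by omega, ?_⟩
  rw [birkhoffSum_add, add_sub_cancel_left]
  exact hle.trans hk.le

end Recurrence

/-- Dekking's extension of the Chung–Fuchs theorem: if `(X,T,μ)` is ergodic with `μ` a
probability measure, `f` measurable and the Birkhoff averages `Sₙf/n → 0` a.e., then the
generalised random walk `Sₙf` is recurrent. -/
theorem dekking_recurrent
    {X : Type*} [MeasurableSpace X] (μ : Measure X) [IsProbabilityMeasure μ]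
    (T : X → X) (hT : Ergodic T μ)
    (f : X → ℝ) (hf : Measurable f)
    (hlim : ∀ᵐ x ∂μ, Tendsto
      (fun n => (∑ k ∈ Finset.range n, f (T^[k] x)) / (n : ℝ)) atTop (nhds 0)) :
    ∀ c : ℝ, 0 < c →
      ∀ᵐ x ∂μ, ∃ᶠ n in atTop, |∑ k ∈ Finset.range n, f (T^[k] x)| ≤ c := by
  intro c hc
  filter_upwards [ae_forall_exists_abs_birkhoffSum_sub_le hT.toMeasurePreserving hf hlim]
    with x hx
  simpa [birkhoffSum] using frequently_abs_sub_le_of_forall_exists_near hx hc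
end

section
/- Let (X, ℬ, T, μ) be a measure-preserving system with μ(X) = 1 and let u, v : X → [0, ∞] be measurable with v finite a.e. and u = v + u∘T μ-a.e. If μ(u < ∞) > 0, then v = 0 μ-a.e. on the T-invariant hull of {u < ∞}; in particular v = 0 μ-a.e. on {u < ∞}. -/
open MeasureTheory Filter
open scoped ENNReal

/-!
Since `u = v + u ∘ T ≥ u ∘ T` and `T` preserves `μ`, the truncations `min u N` and
`min (u ∘ T) N` have the same finite integral, so `u ∘ T = u` a.e. Then `u` is a.e. constant
along orbits, and wherever it is finite, `u = v + u` forces `v = 0`.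
-/

theorem ENNReal.eq_of_forall_min_natCast_eq {a b : ℝ≥0∞} (h : ∀ N : ℕ, min a N = min b N) :
    a = b := by
  have hsup (c : ℝ≥0∞) : ⨆ N : ℕ, min c N = c := by
    rw [← inf_iSup_eq, ENNReal.iSup_natCast]
    exact inf_top_eq c
  rw [← hsup a, ← hsup b]
  simp only [h]

namespace MeasureTheory

variable {X : Type*} [MeasurableSpace X] {μ : Measure X} {T : X → X}

theorem MeasurePreserving.comp_ae_eq_of_comp_ae_le [IsFiniteMeasure μ]
    (hT : MeasurePreserving T μ μ) {f : X → ℝ≥0∞} (hf : Measurable f)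
    (hle : ∀ᵐ x ∂μ, f (T x) ≤ f x) : f ∘ T =ᵐ[μ] f := by
  have htrunc (N : ℕ) : ∀ᵐ x ∂μ, min (f (T x)) N = min (f x) N := by
    have hf_trunc : Measurable fun x => min (f x) N := hf.min measurable_const
    refine ae_eq_of_ae_le_of_lintegral_le ?_ ?_ hf_trunc.aemeasurable ?_
    · filter_upwards [hle] with x hx using min_le_min_right _ hx
    · exact (lintegral_mono fun x => min_le_right _ _).trans_lt
        (lintegral_const_lt_top (ENNReal.natCast_ne_top N)) |>.ne
    · exact (hT.lintegral_comp hf_trunc).ge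
  filter_upwards [ae_all_iff.2 htrunc] with x hx
  exact ENNReal.eq_of_forall_min_natCast_eq hx

theorem Measure.QuasiMeasurePreserving.comp_iterate_ae_eq {Y : Type*} {g : X → Y}
    (hT : QuasiMeasurePreserving T μ μ) (hg : g ∘ T =ᵐ[μ] g) (n : ℕ) :
    g ∘ T^[n] =ᵐ[μ] g := by
  induction n with
  | zero => rfl
  | succ n ih =>
    rw [Function.iterate_succ, ← Function.comp_assoc]
    exact (hT.ae_eq_comp ih).trans hg

end MeasureTheory

theorem coboundary_vanishes_general
    {X : Type*} [MeasurableSpace X] (μ : Measure X) [IsProbabilityMeasure μ]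
    (T : X → X) (hT : MeasurePreserving T μ μ)
    (u v : X → ℝ≥0∞) (hu : Measurable u)
    (hcob : ∀ᵐ x ∂μ, u x = v x + u (T x)) :
    (∀ᵐ x ∂μ, (∃ n : ℕ, u (T^[n] x) < ⊤) → v x = 0) ∧
    (∀ᵐ x ∂μ, u x < ⊤ → v x = 0) := by
  have hinv : u ∘ T =ᵐ[μ] u := hT.comp_ae_eq_of_comp_ae_le hu <| by
    filter_upwards [hcob] with x hx
    exact hx ▸ le_add_self
  have horbit : ∀ᵐ x ∂μ, ∀ n : ℕ, u (T^[n] x) = u x :=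
    ae_all_iff.2 fun n => hT.quasiMeasurePreserving.comp_iterate_ae_eq hinv n
  have hhull : ∀ᵐ x ∂μ, (∃ n : ℕ, u (T^[n] x) < ⊤) → v x = 0 := by
    filter_upwards [horbit, hcob, hinv] with x hx_orbit hx_cob hx_inv
    rintro ⟨n, hn⟩
    have hfin : u x ≠ ⊤ := (hx_orbit n ▸ hn).ne
    have hself : v x + u x = 0 + u x :=
      calc v x + u x = v x + u (T x) := by rw [← hx_inv, Function.comp_apply]
        _ = 0 + u x := by rw [zero_add, hx_cob]
    exact (ENNReal.add_left_inj hfin).1 hself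
  refine ⟨hhull, ?_⟩
  filter_upwards [hhull] with x hx hux
  exact hx ⟨0, hux⟩

/-- If `u = v + u∘T` a.e. with `u, v : X → [0,∞]` measurable, `v` finite a.e., and
`μ(u < ∞) > 0`, then `v = 0` a.e. on the `T`-invariant hull of `{u < ∞}`; in particular
`v = 0` a.e. on `{u < ∞}`. -/
theorem coboundary_vanishes
    {X : Type*} [MeasurableSpace X] (μ : Measure X) [IsProbabilityMeasure μ]
    (T : X → X) (hT : MeasurePreserving T μ μ)
    (u v : X → ℝ≥0∞) (hu : Measurable u) (hv : Measurable v)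
    (hvfin : ∀ᵐ x ∂μ, v x < ⊤)
    (hcob : ∀ᵐ x ∂μ, u x = v x + u (T x))
    (hpos : 0 < μ {x | u x < ⊤}) :
    (∀ᵐ x ∂μ, (∃ n : ℕ, u (T^[n] x) < ⊤) → v x = 0) ∧
    (∀ᵐ x ∂μ, u x < ⊤ → v x = 0) :=
  coboundary_vanishes_general μ T hT u v hu hcob
end
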